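/- For all real x in the domain of ζ₂, one has −1 < ζ₂(x) < 0, where ζ₂(x) = −(x·ζ₁(x) + ζ₁(x)²) and ζ₁(x) = φ(x)/Φ(x). -/

import Mathlib

open MeasureTheory Real

noncomputable def phi (x : ℝ) : ℝ := (Real.sqrt (2 * Real.pi))⁻¹ * Real.exp (-x ^ 2 / 2)

noncomputable def Phi (x : ℝ) : ℝ := ∫ t in Set.Iic x, phi t

noncomputable def zeta1 (x : ℝ) : ℝ := phi x / Phi x

noncomputable def zeta2 (x : ℝ) : ℝ := -(x * zeta1 x + (zeta1 x) ^ 2)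

/-!
Clearing the denominator `Φ x > 0`, `ζ₂ x < 0` amounts to `v x := φ x + x Φ x > 0` and
`ζ₂ x > -1` to `g x := Φ x ^ 2 - φ x ^ 2 - x φ x Φ x > 0`. With `u x := (1 + x ^ 2) Φ x + x φ x`
one has `v' = Φ`, `u' = 2 v` and `g' = φ u`, and `v`, `u`, `g` all tend to `0` at `-∞` (since
`Φ x ≤ φ x` for `x ≤ -1`, and `φ` decays faster than any power). So `v`, `u`, `g` are, in turn,
strictly increasing from `0`, hence positive.
-/

open Filter Topology

lemma StrictMono.lt_of_tendsto_atBot {α β : Type*} [PartialOrder α] [IsCodirectedOrder α]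
    [NoMinOrder α] [TopologicalSpace β] [Preorder β] [OrderClosedTopology β] {f : α → β} {b : β}
    (hf : StrictMono f) (hb : Tendsto f atBot (𝓝 b)) (x : α) : b < f x := by
  obtain ⟨y, hy⟩ := exists_lt x
  exact (hf.monotone.le_of_tendsto hb y).trans_lt (hf hy)

lemma phi_eq_mul_exp_neg_mul_sq : phi = fun x => (√(2 * π))⁻¹ * exp (-(1 / 2) * x ^ 2) := by
  ext x; rw [phi]; ring_nf

lemma phi_pos (x : ℝ) : 0 < phi x := by
  unfold phi; positivity

lemma continuous_phi : Continuous phi := by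
  unfold phi; fun_prop

lemma integrable_phi : Integrable phi := by
  rw [phi_eq_mul_exp_neg_mul_sq]; exact (integrable_exp_neg_mul_sq (by norm_num)).const_mul _

lemma integrable_neg_mul_phi : Integrable fun x => -x * phi x := by
  rw [phi_eq_mul_exp_neg_mul_sq]
  refine ((integrable_mul_exp_neg_mul_sq (b := 1 / 2) (by norm_num)).const_mul
    (-(√(2 * π))⁻¹)).congr (.of_forall fun x => ?_)
  ring

lemma hasDerivAt_phi (x : ℝ) : HasDerivAt phi (-x * phi x) x := by
  have h : HasDerivAt (fun y : ℝ => -y ^ 2 / 2) (-x) x :=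
    ((hasDerivAt_pow 2 x).neg.div_const 2).congr_deriv (by ring)
  exact (h.exp.const_mul (√(2 * π))⁻¹).congr_deriv (by unfold phi; ring)

lemma tendsto_pow_mul_phi_cocompact (n : ℕ) :
    Tendsto (fun x => x ^ n * phi x) (cocompact ℝ) (𝓝 0) := by
  rw [tendsto_zero_iff_norm_tendsto_zero]
  have := (tendsto_rpow_abs_mul_exp_neg_mul_sq_cocompact (by norm_num : (0 : ℝ) < 1 / 2)
    n).const_mul (√(2 * π))⁻¹
  rw [mul_zero] at this
  refine this.congr fun x => ?_
  rw [norm_mul, norm_pow, norm_of_nonneg (phi_pos x).le, phi_eq_mul_exp_neg_mul_sq, rpow_natCast,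
    norm_eq_abs]
  ring

lemma Phi_eq_integral_add (x : ℝ) : Phi x = (∫ t in (0 : ℝ)..x, phi t) + Phi 0 := by
  rw [← intervalIntegral.integral_Iic_sub_Iic integrable_phi.integrableOn
    integrable_phi.integrableOn, Phi, Phi, sub_add_cancel]

lemma hasDerivAt_Phi (x : ℝ) : HasDerivAt Phi (phi x) x := by
  rw [funext Phi_eq_integral_add]
  exact ((continuous_phi.integral_hasStrictDerivAt 0 x).hasDerivAt).add_const _

lemma Phi_nonneg (x : ℝ) : 0 ≤ Phi x :=
  setIntegral_nonneg measurableSet_Iic fun t _ => (phi_pos t).le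

-- `φ x = ∫_{t ≤ x} (-t) φ t` dominates `∫_{t ≤ x} φ t` once `-t ≥ 1`.
lemma Phi_le_phi {x : ℝ} (hx : x ≤ -1) : Phi x ≤ phi x := by
  have hphi : ∫ t in Set.Iic x, -t * phi t = phi x := by
    simpa using integral_Iic_of_hasDerivAt_of_tendsto' (fun t _ => hasDerivAt_phi t)
      integrable_neg_mul_phi.integrableOn
      ((tendsto_pow_mul_phi_cocompact 0).mono_left atBot_le_cocompact |>.congr fun t => one_mul _)
  rw [← hphi]
  refine setIntegral_mono_on integrable_phi.integrableOn integrable_neg_mul_phi.integrableOn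
    measurableSet_Iic fun t ht => ?_
  have : 1 ≤ -t := by linarith [Set.mem_Iic.mp ht]
  nlinarith [phi_pos t]

lemma tendsto_pow_mul_Phi_atBot (n : ℕ) :
    Tendsto (fun x => x ^ n * Phi x) atBot (𝓝 0) := by
  refine squeeze_zero_norm' ?_
    (tendsto_zero_iff_norm_tendsto_zero.mp
      ((tendsto_pow_mul_phi_cocompact n).mono_left atBot_le_cocompact))
  filter_upwards [eventually_le_atBot (-1)] with x hx
  rw [norm_mul, norm_mul, norm_of_nonneg (Phi_nonneg x), norm_of_nonneg (phi_pos x).le]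
  exact mul_le_mul_of_nonneg_left (Phi_le_phi hx) (norm_nonneg _)

lemma tendsto_phi_atBot : Tendsto phi atBot (𝓝 0) := by
  simpa using (tendsto_pow_mul_phi_cocompact 0).mono_left atBot_le_cocompact

lemma tendsto_mul_phi_atBot : Tendsto (fun x => x * phi x) atBot (𝓝 0) := by
  simpa using (tendsto_pow_mul_phi_cocompact 1).mono_left atBot_le_cocompact

lemma tendsto_Phi_atBot : Tendsto Phi atBot (𝓝 0) := by
  simpa using tendsto_pow_mul_Phi_atBot 0

lemma Phi_pos (x : ℝ) : 0 < Phi x :=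
  (strictMono_of_hasDerivAt_pos hasDerivAt_Phi phi_pos).lt_of_tendsto_atBot tendsto_Phi_atBot x

lemma phi_add_mul_Phi_pos (x : ℝ) : 0 < phi x + x * Phi x := by
  have hderiv (y : ℝ) : HasDerivAt (fun t => phi t + t * Phi t) (Phi y) y :=
    ((hasDerivAt_phi y).add ((hasDerivAt_id' y).mul (hasDerivAt_Phi y))).congr_deriv (by ring)
  have hlim : Tendsto (fun t => phi t + t * Phi t) atBot (𝓝 0) := by
    simpa using tendsto_phi_atBot.add (tendsto_pow_mul_Phi_atBot 1)
  exact (strictMono_of_hasDerivAt_pos hderiv Phi_pos).lt_of_tendsto_atBot hlim x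

lemma one_add_sq_mul_Phi_add_mul_phi_pos (x : ℝ) : 0 < (1 + x ^ 2) * Phi x + x * phi x := by
  have hderiv (y : ℝ) : HasDerivAt (fun t => (1 + t ^ 2) * Phi t + t * phi t)
      (2 * (phi y + y * Phi y)) y :=
    ((((hasDerivAt_pow 2 y).const_add 1).mul (hasDerivAt_Phi y)).add
      ((hasDerivAt_id' y).mul (hasDerivAt_phi y))).congr_deriv (by ring)
  have hlim : Tendsto (fun t => (1 + t ^ 2) * Phi t + t * phi t) atBot (𝓝 0) := by
    have := ((tendsto_pow_mul_Phi_atBot 0).add (tendsto_pow_mul_Phi_atBot 2)).add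
      tendsto_mul_phi_atBot
    simp only [pow_zero, one_mul, add_zero] at this
    exact this.congr fun t => by ring
  exact (strictMono_of_hasDerivAt_pos hderiv fun y => by linarith [phi_add_mul_Phi_pos y])
    |>.lt_of_tendsto_atBot hlim x

lemma mul_phi_mul_Phi_add_phi_sq_lt_Phi_sq (x : ℝ) :
    x * phi x * Phi x + phi x ^ 2 < Phi x ^ 2 := by
  have hderiv (y : ℝ) : HasDerivAt (fun t => Phi t ^ 2 - phi t ^ 2 - t * phi t * Phi t)
      (phi y * ((1 + y ^ 2) * Phi y + y * phi y)) y :=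
    ((((hasDerivAt_Phi y).pow 2).sub ((hasDerivAt_phi y).pow 2)).sub
      (((hasDerivAt_id' y).fun_mul (hasDerivAt_phi y)).fun_mul (hasDerivAt_Phi y))).congr_deriv
      (by ring)
  have hlim : Tendsto (fun t => Phi t ^ 2 - phi t ^ 2 - t * phi t * Phi t) atBot (𝓝 0) := by
    simpa using ((tendsto_Phi_atBot.pow 2).sub (tendsto_phi_atBot.pow 2)).sub
      (tendsto_mul_phi_atBot.mul tendsto_Phi_atBot)
  have := (strictMono_of_hasDerivAt_pos hderiv fun y =>
    mul_pos (phi_pos y) (one_add_sq_mul_Phi_add_mul_phi_pos y)).lt_of_tendsto_atBot hlim x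
  linarith

lemma zeta1_pos (x : ℝ) : 0 < zeta1 x :=
  div_pos (phi_pos x) (Phi_pos x)

lemma add_zeta1_pos (x : ℝ) : 0 < x + zeta1 x := by
  have hΦ := Phi_pos x
  have : x + zeta1 x = (phi x + x * Phi x) / Phi x := by
    rw [zeta1]; field_simp; ring
  rw [this]
  exact div_pos (phi_add_mul_Phi_pos x) hΦ

lemma mul_zeta1_add_zeta1_sq_lt_one (x : ℝ) : x * zeta1 x + zeta1 x ^ 2 < 1 := by
  have hΦ := Phi_pos x
  have : x * zeta1 x + zeta1 x ^ 2 = (x * phi x * Phi x + phi x ^ 2) / Phi x ^ 2 := by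
    rw [zeta1]; field_simp
  rw [this, div_lt_one (by positivity)]
  exact mul_phi_mul_Phi_add_phi_sq_lt_Phi_sq x

theorem zeta2_bounds (x : ℝ) : -1 < zeta2 x ∧ zeta2 x < 0 := by
  constructor
  · have := mul_zeta1_add_zeta1_sq_lt_one x
    rw [zeta2]
    linarith
  · have : zeta2 x = -(zeta1 x * (x + zeta1 x)) := by rw [zeta2]; ring
    rw [this, neg_neg_iff_pos]
    exact mul_pos (zeta1_pos x) (add_zeta1_pos x)
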